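/- arXiv:2005.02735 — 2 statements merged into one kernel-verified Lean document; each statement's English description precedes it below -/
import Mathlib

section
/- Let $q \in (0,1]$ and let $k \ge 1$ be an integer. For any positive real numbers $t_1, \dots, t_k$, one has $t_1^q + \cdots + t_k^q \ge \big(\sum_{i=1}^k t_i\big)^q + \big(1 - \tfrac{1}{2^{1-q}}\big)\big((k-1)\min_{i \le k} t_i\big)^q$. -/
/-!
Concavity of `t ↦ t ^ q` gives `(a + b) ^ q + b ^ q ≤ a ^ q + (2 * b) ^ q` for `0 ≤ b ≤ a`,
the pair `(b, a + b)` being more spread out than `(a, 2 * b)`; since `2 ^ q - 1 ≤ 2 ^ (q - 1)`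
this is the two-variable case. For `k + 1` terms with minimum `m`, apply the two-variable case
to the last term `a` and the sum `S` of the others, and merge its defect `c * min S a ^ q` with
the inductive one `c * (k * m) ^ q` by subadditivity of `t ↦ t ^ q`, using `m ≤ min S a`.
-/

open Real

theorem ConcaveOn.add_le_add_of_add_eq {s : Set ℝ} {f : ℝ → ℝ} (hf : ConcaveOn ℝ s f)
    {u v x y : ℝ} (hu : u ∈ s) (hv : v ∈ s) (hux : u ≤ x) (hxv : x ≤ v)
    (hxy : x + y = u + v) :
    f u + f v ≤ f x + f y := by
  rcases (hux.trans hxv).eq_or_lt with rfl | huv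
  · obtain rfl : x = u := le_antisymm hxv hux
    obtain rfl : y = x := by linarith
    rfl
  set θ := (v - x) / (v - u)
  have hθ0 : 0 ≤ θ := div_nonneg (by linarith) (by linarith)
  have hθ1 : θ ≤ 1 := (div_le_one (by linarith)).2 (by linarith)
  have hx : θ * u + (1 - θ) * v = x := by simp only [θ]; field_simp; ring
  have hy : (1 - θ) * u + θ * v = y := by linarith
  have h₁ := hf.2 hu hv hθ0 (sub_nonneg.2 hθ1) (by ring)
  have h₂ := hf.2 hu hv (sub_nonneg.2 hθ1) hθ0 (by ring)
  simp only [smul_eq_mul, hx, hy] at h₁ h₂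
  linarith

theorem Real.rpow_add_add_rpow_le {q a b : ℝ} (hq0 : 0 ≤ q) (hq1 : q ≤ 1) (hb : 0 ≤ b)
    (hba : b ≤ a) : (a + b) ^ q + b ^ q ≤ a ^ q + (2 * b) ^ q := by
  have := (Real.concaveOn_rpow hq0 hq1).add_le_add_of_add_eq (u := b) (v := a + b) (x := a)
    (y := 2 * b) hb (by simp; linarith) hba (by linarith) (by ring)
  linarith

theorem Real.one_sub_one_div_two_rpow_le {q : ℝ} (hq1 : q ≤ 1) :
    1 - 1 / (2:ℝ) ^ (1 - q) ≤ 2 - 2 ^ q := by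
  have h : 1 / (2:ℝ) ^ (1 - q) = 2 ^ q / 2 := by
    rw [one_div, ← Real.rpow_neg zero_le_two, neg_sub, Real.rpow_sub zero_lt_two, Real.rpow_one]
  have : (2:ℝ) ^ q ≤ 2 := by simpa using Real.rpow_le_rpow_of_exponent_le one_le_two hq1
  rw [h]; linarith

theorem Real.rpow_add_add_mul_rpow_le {q a b : ℝ} (hq0 : 0 ≤ q) (hq1 : q ≤ 1) (hb : 0 ≤ b)
    (hba : b ≤ a) : (a + b) ^ q + (1 - 1 / 2 ^ (1 - q)) * b ^ q ≤ a ^ q + b ^ q := by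
  have key := rpow_add_add_rpow_le hq0 hq1 hb hba
  rw [mul_rpow zero_le_two hb] at key
  nlinarith [one_sub_one_div_two_rpow_le hq1, rpow_nonneg hb q]

theorem Real.rpow_add_add_mul_min_rpow_le {q a b : ℝ} (hq0 : 0 ≤ q) (hq1 : q ≤ 1)
    (ha : 0 ≤ a) (hb : 0 ≤ b) :
    (a + b) ^ q + (1 - 1 / 2 ^ (1 - q)) * min a b ^ q ≤ a ^ q + b ^ q := by
  rcases le_total b a with h | h
  · rw [min_eq_right h]; exact rpow_add_add_mul_rpow_le hq0 hq1 hb h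
  · rw [min_eq_left h, add_comm a b, add_comm (a ^ q)]; exact rpow_add_add_mul_rpow_le hq0 hq1 ha h

theorem Real.rpow_sum_add_mul_rpow_le_sum_rpow {q m : ℝ} (hq0 : 0 < q) (hq1 : q ≤ 1)
    (hm : 0 ≤ m) :
    ∀ (k : ℕ) (t : Fin (k + 1) → ℝ), (∀ i, m ≤ t i) →
      (∑ i, t i) ^ q + (1 - 1 / 2 ^ (1 - q)) * (k * m) ^ q ≤ ∑ i, t i ^ q
  | 0, t, _ => by simp [zero_rpow hq0.ne']
  | k + 1, t, htm => by
    set c : ℝ := 1 - 1 / 2 ^ (1 - q)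
    set S := ∑ i : Fin (k + 1), t i.castSucc
    set a := t (Fin.last _)
    have hc : 0 ≤ c := by
      have : (1:ℝ) ≤ 2 ^ (1 - q) := one_le_rpow one_le_two (by linarith)
      simp only [c, sub_nonneg]; exact div_le_one_of_le₀ this (by positivity)
    have hmS : m ≤ S := (htm _).trans <|
      Finset.single_le_sum (f := fun i : Fin (k + 1) => t i.castSucc)
        (fun i _ => hm.trans (htm _)) (Finset.mem_univ 0)
    have hma : m ≤ a := htm _
    have ih := rpow_sum_add_mul_rpow_le_sum_rpow hq0 hq1 hm k (fun i => t i.castSucc)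
      fun i => htm _
    have htwo := rpow_add_add_mul_min_rpow_le hq0.le hq1 (hm.trans hmS) (hm.trans hma)
    have hsub := rpow_add_le_add_rpow (hm.trans (le_min hmS hma))
      (by positivity : 0 ≤ (k:ℝ) * m) hq0.le hq1
    have hmono : ((k + 1 : ℕ) * m) ^ q ≤ (min S a + k * m) ^ q :=
      rpow_le_rpow (by positivity) (by push_cast; nlinarith [le_min hmS hma]) hq0.le
    rw [Fin.sum_univ_castSucc, Fin.sum_univ_castSucc (fun i => t i ^ q)]
    calc (S + a) ^ q + c * ((k + 1 : ℕ) * m) ^ q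
        ≤ (S + a) ^ q + c * (min S a ^ q + (k * m) ^ q) := by gcongr; exact hmono.trans hsub
      _ ≤ ∑ i : Fin (k + 1), t i.castSucc ^ q + a ^ q := by linarith

theorem stmt_1 (q : ℝ) (hq0 : 0 < q) (hq1 : q ≤ 1) (k : ℕ)
    (t : Fin (k + 1) → ℝ) (ht : ∀ i, 0 < t i) :
    ∑ i, t i ^ q ≥ (∑ i, t i) ^ q +
      (1 - 1 / 2 ^ (1 - q)) * ((k : ℝ) * Finset.univ.inf' Finset.univ_nonempty t) ^ q :=
  Real.rpow_sum_add_mul_rpow_le_sum_rpow hq0 hq1 ((Finset.lt_inf'_iff _).2 fun i _ => ht i).le k t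
    fun i => Finset.inf'_le _ (Finset.mem_univ i)
end

section
/- Let $d \ge 3$. There exists a constant $C > 0$ such that for every finite subset $\Lambda \subseteq \mathbb{Z}^d$, $\sum_{z \in \Lambda} \frac{1}{1 + \|z\|^{d-2}} \le C |\Lambda|^{2/d}$, where $\|\cdot\|$ denotes the Euclidean norm. -/
/-!
Split `Λ` at the cube `[-M, M]^d` with `M = ⌊|Λ|^{1/d}⌋`. Inside the cube, the lattice shell at
sup-distance `k + 1` has `O(k^{d-1})` points, each contributing at most `(k + 1)^{-(d-2)}`, so the
cube contributes `O(M^2)`. Outside it every term is at most `(M + 1)^{-(d-2)} ≤ |Λ|^{-(d-2)/d}`,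
and there are at most `|Λ|` of them, which gives `|Λ|^{2/d}` again.
-/

/-- Euclidean norm of a point of `ℤ^d`. -/
noncomputable def euclidNorm (d : ℕ) (z : Fin d → ℤ) : ℝ :=
  Real.sqrt (∑ i, ((z i : ℝ)) ^ 2)

open Finset

lemma abs_le_euclidNorm {d : ℕ} (z : Fin d → ℤ) (i : Fin d) : |(z i : ℝ)| ≤ euclidNorm d z := by
  rw [euclidNorm, ← Real.sqrt_sq_eq_abs]
  exact Real.sqrt_le_sqrt <|
    single_le_sum (f := fun j => ((z j : ℝ)) ^ 2) (fun j _ => sq_nonneg _) (mem_univ i)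

lemma euclidNorm_nonneg (d : ℕ) (z : Fin d → ℤ) : 0 ≤ euclidNorm d z :=
  Real.sqrt_nonneg _

noncomputable def greenBound (d : ℕ) (z : Fin d → ℤ) : ℝ :=
  1 / (1 + euclidNorm d z ^ (d - 2))

lemma greenBound_nonneg (d : ℕ) (z : Fin d → ℤ) : 0 ≤ greenBound d z := by
  have := euclidNorm_nonneg d z
  unfold greenBound
  positivity

lemma greenBound_le_one (d : ℕ) (z : Fin d → ℤ) : greenBound d z ≤ 1 := by
  have := euclidNorm_nonneg d z
  unfold greenBound
  rw [div_le_one (by positivity)]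
  linarith [pow_nonneg this (d - 2)]

lemma greenBound_le_of_le_euclidNorm {d : ℕ} {z : Fin d → ℤ} {r : ℝ} (hr : 0 < r)
    (h : r ≤ euclidNorm d z) : greenBound d z ≤ 1 / r ^ (d - 2) := by
  unfold greenBound
  gcongr
  linarith [pow_le_pow_left₀ hr.le h (d - 2)]

noncomputable def cube (d M : ℕ) : Finset (Fin d → ℤ) :=
  Fintype.piFinset fun _ => Icc (-(M : ℤ)) M

lemma cube_mono (d : ℕ) : Monotone (cube d) := fun _ _ h =>
  Fintype.piFinset_subset _ _ fun _ => Icc_subset_Icc (by simpa using h) (by simpa using h)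

lemma card_cube (d M : ℕ) : #(cube d M) = (2 * M + 1) ^ d := by
  simp only [cube, Fintype.card_piFinset, Int.card_Icc, prod_const, card_univ, Fintype.card_fin]
  congr 1
  omega

lemma cube_zero (d : ℕ) : cube d 0 = {0} := by
  ext z
  simp [cube, funext_iff]

lemma card_cube_succ_sdiff_le (d M : ℕ) :
    #(cube d (M + 1) \ cube d M) ≤ 2 * d * (3 * (M + 1)) ^ (d - 1) := by
  rw [card_sdiff_of_subset (cube_mono d M.le_succ), card_cube, card_cube]
  calc (2 * (M + 1) + 1) ^ d - (2 * M + 1) ^ d ≤ 2 * d * (2 * M + 3) ^ (d - 1) := by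
        grind [abs_pow_sub_pow_le (α := ℤ) (2 * M + 3) (2 * M + 1) d]
    _ ≤ 2 * d * (3 * (M + 1)) ^ (d - 1) := by gcongr; omega

lemma add_one_le_euclidNorm_of_notMem_cube {d M : ℕ} {z : Fin d → ℤ} (hz : z ∉ cube d M) :
    (M : ℝ) + 1 ≤ euclidNorm d z := by
  obtain ⟨i, hi⟩ : ∃ i, z i ∉ Icc (-(M : ℤ)) M := by
    simpa only [cube, Fintype.mem_piFinset, not_forall] using hz
  have : (M : ℤ) + 1 ≤ |z i| := by
    rw [mem_Icc] at hi
    grind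
  refine le_trans ?_ (abs_le_euclidNorm z i)
  exact_mod_cast this

lemma greenBound_le_of_notMem_cube {d M : ℕ} {z : Fin d → ℤ} (hz : z ∉ cube d M) :
    greenBound d z ≤ 1 / ((M : ℝ) + 1) ^ (d - 2) :=
  greenBound_le_of_le_euclidNorm (by positivity) (add_one_le_euclidNorm_of_notMem_cube hz)

lemma sum_greenBound_cube_succ_sdiff_le (d M : ℕ) :
    ∑ z ∈ cube d (M + 1) \ cube d M, greenBound d z ≤ 2 * d * 3 ^ (d - 1) * ((M : ℝ) + 1) := by
  have hcard : (#(cube d (M + 1) \ cube d M) : ℝ)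
      ≤ 2 * d * 3 ^ (d - 1) * ((M : ℝ) + 1) ^ (d - 1) := by
    rw [mul_assoc _ (3 ^ (d - 1) : ℝ), ← mul_pow]
    exact_mod_cast card_cube_succ_sdiff_le d M
  have hpow : ((M : ℝ) + 1) ^ (d - 1) ≤ ((M : ℝ) + 1) ^ (d - 2) * ((M : ℝ) + 1) := by
    rw [← pow_succ]
    exact pow_le_pow_right₀ (by linarith) (by omega)
  calc ∑ z ∈ cube d (M + 1) \ cube d M, greenBound d z
      ≤ #(cube d (M + 1) \ cube d M) * (1 / ((M : ℝ) + 1) ^ (d - 2)) := by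
        rw [← nsmul_eq_mul]
        exact sum_le_card_nsmul _ _ _ fun z hz => greenBound_le_of_notMem_cube (mem_sdiff.1 hz).2
    _ ≤ 2 * d * 3 ^ (d - 1) * (((M : ℝ) + 1) ^ (d - 2) * ((M : ℝ) + 1))
          * (1 / ((M : ℝ) + 1) ^ (d - 2)) := by
        gcongr
        exact hcard.trans (mul_le_mul_of_nonneg_left hpow (by positivity))
    _ = 2 * d * 3 ^ (d - 1) * ((M : ℝ) + 1) := by
        field_simp

lemma sum_greenBound_cube_le (d M : ℕ) :
    ∑ z ∈ cube d M, greenBound d z ≤ 1 + 2 * d * 3 ^ (d - 1) * (M : ℝ) ^ 2 := by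
  induction M with
  | zero => simpa [cube_zero] using greenBound_le_one d 0
  | succ M ih =>
    rw [← sum_sdiff (cube_mono d M.le_succ)]
    have hshell := sum_greenBound_cube_succ_sdiff_le d M
    have hc : (0 : ℝ) ≤ 2 * d * 3 ^ (d - 1) * M := by positivity
    push_cast
    nlinarith

lemma sum_greenBound_le (d : ℕ) (Λ : Finset (Fin d → ℤ)) (M : ℕ) :
    ∑ z ∈ Λ, greenBound d z
      ≤ 1 + 2 * d * 3 ^ (d - 1) * (M : ℝ) ^ 2 + #Λ / ((M : ℝ) + 1) ^ (d - 2) := by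
  rw [← sum_inter_add_sum_sdiff Λ (cube d M)]
  gcongr
  · calc ∑ z ∈ Λ ∩ cube d M, greenBound d z ≤ ∑ z ∈ cube d M, greenBound d z :=
          sum_le_sum_of_subset_of_nonneg inter_subset_right fun z _ _ => greenBound_nonneg d z
      _ ≤ _ := sum_greenBound_cube_le d M
  · calc ∑ z ∈ Λ \ cube d M, greenBound d z
        ≤ #(Λ \ cube d M) • (1 / ((M : ℝ) + 1) ^ (d - 2)) :=
          sum_le_card_nsmul _ _ _ fun z hz => greenBound_le_of_notMem_cube (mem_sdiff.1 hz).2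
      _ ≤ #Λ / ((M : ℝ) + 1) ^ (d - 2) := by
          rw [nsmul_eq_mul, mul_one_div]
          gcongr
          exact sdiff_subset

theorem stmt_3 (d : ℕ) (hd : 3 ≤ d) :
    ∃ C > 0, ∀ Λ : Finset (Fin d → ℤ),
      ∑ z ∈ Λ, 1 / (1 + euclidNorm d z ^ (d - 2)) ≤ C * (Λ.card : ℝ) ^ (2 / (d : ℝ)) := by
  refine ⟨2 * d * 3 ^ (d - 1) + 2, by positivity, fun Λ => ?_⟩
  rcases Λ.eq_empty_or_nonempty with rfl | hΛ
  · simp [Real.zero_rpow (by positivity : 2 / (d : ℝ) ≠ 0)]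
  set r : ℝ := (#Λ : ℝ) ^ (d : ℝ)⁻¹
  have hr1 : 1 ≤ r := Real.one_le_rpow (by exact_mod_cast hΛ.card_pos) (by positivity)
  have hrd : r ^ d = #Λ := Real.rpow_inv_natCast_pow (by positivity) (by omega)
  have hr2 : r ^ 2 = (#Λ : ℝ) ^ (2 / (d : ℝ)) := by
    rw [← Real.rpow_mul_natCast (by positivity), div_eq_inv_mul, Nat.cast_two]
  have hfloor : (⌊r⌋₊ : ℝ) ≤ r := Nat.floor_le (by positivity)
  have hout : #Λ / ((⌊r⌋₊ : ℝ) + 1) ^ (d - 2) ≤ r ^ 2 := by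
    rw [← hrd, div_le_iff₀ (by positivity), ← pow_sub_mul_pow r (by omega : 2 ≤ d), mul_comm]
    gcongr
    exact (Nat.lt_floor_add_one r).le
  calc ∑ z ∈ Λ, greenBound d z
      ≤ 1 + 2 * d * 3 ^ (d - 1) * (⌊r⌋₊ : ℝ) ^ 2 + #Λ / ((⌊r⌋₊ : ℝ) + 1) ^ (d - 2) :=
        sum_greenBound_le d Λ ⌊r⌋₊
    _ ≤ r ^ 2 + 2 * d * 3 ^ (d - 1) * r ^ 2 + r ^ 2 := by gcongr; nlinarith
    _ = _ := by rw [hr2]; ring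
end
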